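/- Consider the secure summation model with symmetric groupwise keys of group size G, with K ≥ 2 users, 0 ≤ T ≤ K−2 and G ≤ K−T. If correctness holds and security holds against some colluding set T' ⊆ {1,…,K} with |T'| = T, then the groupwise key length satisfies (K−T−1)·L ≤ C(K−T, G)·L_S, where C(·,·) is the binomial coefficient. Equivalently, the groupwise key rate satisfies R_S = L_S/L ≥ (K−T−1)/C(K−T, G). -/

import Mathlib

/-!
Let `U` be the complement of the colluding set `T'` and `D` the view of the colluders. We bound
`H(X_U | D)`, the entropy of the messages of `U` given `D`, in two ways.

From below: all other inputs, all keys and `X_a` determine every message, hence (by correctness)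
the sum, hence `W_a`; as `W_a` is uniform and independent of the other inputs and of the keys,
each `a ∈ U` contributes `L log q`, so `H(X_U | D) ≥ (K - T) L log q`.

From above: adding the sum to the conditioning costs at most `L log q`; by security, adding all
inputs as well costs nothing; and then `X_U` is a function of the keys of the groups contained in
`U`, of which there are `C(K - T, G)`. Hence `H(X_U | D) ≤ L log q + C(K - T, G) L_S log q`.
-/

open MeasureTheory ProbabilityTheory

/-- Shannon entropy (in natural log units) of a finitely-valued random variable. -/
noncomputable def entr {Ω : Type*} [MeasurableSpace Ω] (μ : Measure Ω)
    {α : Type*} [Fintype α] [MeasurableSpace α] (X : Ω → α) : ℝ :=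
  ∑ a : α, Real.negMulLog ((μ.map X) {a}).toReal

/-- Conditional Shannon entropy `H(X | Y)`. -/
noncomputable def condEntr {Ω : Type*} [MeasurableSpace Ω] (μ : Measure Ω)
    {α β : Type*} [Fintype α] [MeasurableSpace α] [Fintype β] [MeasurableSpace β]
    (X : Ω → α) (Y : Ω → β) : ℝ :=
  entr μ (fun ω => (X ω, Y ω)) - entr μ Y

/-- Conditional mutual information `I(X ; Y | Z)`. -/
noncomputable def condMI {Ω : Type*} [MeasurableSpace Ω] (μ : Measure Ω)
    {α β γ : Type*} [Fintype α] [MeasurableSpace α] [Fintype β] [MeasurableSpace β]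
    [Fintype γ] [MeasurableSpace γ] (X : Ω → α) (Y : Ω → β) (Z : Ω → γ) : ℝ :=
  condEntr μ X Z + condEntr μ Y Z - condEntr μ (fun ω => (X ω, Y ω)) Z

/-- A random variable is uniformly distributed on a finite type. -/
def IsUnif {Ω : Type*} [MeasurableSpace Ω] (μ : Measure Ω)
    {α : Type*} [Fintype α] [MeasurableSpace α] (X : Ω → α) : Prop :=
  ∀ a : α, μ (X ⁻¹' {a}) = (Fintype.card α : ENNReal)⁻¹

open Real

section NegMulLog

variable {α : Type*} [Fintype α]

lemma sum_negMulLog_eq_negMulLog_sum_add {r : α → ℝ} (hr : ∀ a, 0 ≤ r a) :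
    ∑ a, negMulLog (r a)
      = negMulLog (∑ a, r a) + (∑ a, r a) * ∑ a, negMulLog (r a / ∑ a, r a) := by
  set s := ∑ a, r a with hs
  rcases eq_or_ne s 0 with hs0 | hs0
  · have hr0 : ∀ a, r a = 0 := fun a =>
      (Finset.sum_eq_zero_iff_of_nonneg fun a _ => hr a).mp hs0 a (Finset.mem_univ a)
    simp [hr0, hs0]
  · have hsplit : ∀ a, negMulLog (r a) = r a / s * negMulLog s + s * negMulLog (r a / s) :=
      fun a => by rw [← negMulLog_mul, mul_div_cancel₀ _ hs0]
    simp only [hsplit, Finset.sum_add_distrib, ← Finset.sum_mul, ← Finset.mul_sum,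
      ← Finset.sum_div, ← hs, div_self hs0, one_mul]

/-- Jensen's inequality for the perspective `(x, w) ↦ w * negMulLog (x / w)` of `negMulLog`. -/
lemma sum_mul_negMulLog_div_le {x w : α → ℝ} (hx : ∀ a, 0 ≤ x a) (hw : ∀ a, 0 ≤ w a)
    (hxw : ∀ a, w a = 0 → x a = 0) :
    ∑ a, w a * negMulLog (x a / w a)
      ≤ (∑ a, w a) * negMulLog ((∑ a, x a) / ∑ a, w a) := by
  set s := ∑ a, w a with hs
  rcases (Finset.sum_nonneg fun a _ => hw a).eq_or_lt with hs0 | hs0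
  · have hw0 : ∀ a, w a = 0 := fun a =>
      (Finset.sum_eq_zero_iff_of_nonneg fun a _ => hw a).mp hs0.symm a (Finset.mem_univ a)
    simp [hs, hw0]
  · have hjensen := concaveOn_negMulLog.le_map_sum (t := Finset.univ) (w := fun a => w a / s)
      (p := fun a => x a / w a) (fun a _ => div_nonneg (hw a) hs0.le)
      (by rw [← Finset.sum_div, ← hs, div_self hs0.ne'])
      (fun a _ => Set.mem_Ici.mpr (div_nonneg (hx a) (hw a)))
    have hmean : ∀ a, (w a / s) • (x a / w a) = x a / s := fun a => by
      rcases eq_or_ne (w a) 0 with h | h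
      · simp [h, hxw a h]
      · rw [smul_eq_mul]; field_simp
    simp only [hmean, smul_eq_mul, div_mul_eq_mul_div, ← Finset.sum_div] at hjensen
    rwa [div_le_iff₀ hs0, mul_comm] at hjensen

lemma sum_negMulLog_le_log_card {p : α → ℝ} (hp : ∀ a, 0 ≤ p a) (hp1 : ∑ a, p a = 1) :
    ∑ a, negMulLog (p a) ≤ log (Fintype.card α) := by
  have h := sum_mul_negMulLog_div_le (w := fun _ => 1) hp (fun _ => zero_le_one)
    (fun _ h => absurd h one_ne_zero)
  simp only [div_one, one_mul, hp1, Finset.sum_const, Finset.card_univ, nsmul_eq_mul,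
    mul_one] at h
  rcases eq_or_ne (Fintype.card α : ℝ) 0 with h0 | h0
  · simpa [h0] using h
  · refine h.trans_eq ?_
    rw [negMulLog, one_div, log_inv]
    field_simp

end NegMulLog

def Determines {Ω β γ : Type*} (Y : Ω → β) (Z : Ω → γ) : Prop :=
  ∃ g : β → γ, ∀ ω, Z ω = g (Y ω)

namespace Determines

variable {Ω β γ δ : Type*} {Y : Ω → β} {Z : Ω → γ} {V : Ω → δ}

lemma refl (Y : Ω → β) : Determines Y Y := ⟨id, fun _ => rfl⟩

lemma trans (h₁ : Determines Y Z) (h₂ : Determines Z V) : Determines Y V := by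
  obtain ⟨g, hg⟩ := h₁
  obtain ⟨f, hf⟩ := h₂
  exact ⟨f ∘ g, fun ω => by rw [hf, hg, Function.comp_apply]⟩

lemma prodMk (h₁ : Determines Y Z) (h₂ : Determines Y V) :
    Determines Y (fun ω => (Z ω, V ω)) := by
  obtain ⟨g, hg⟩ := h₁
  obtain ⟨f, hf⟩ := h₂
  exact ⟨fun y => (g y, f y), fun ω => Prod.ext (hg ω) (hf ω)⟩

lemma fst (Y : Ω → β) (Z : Ω → γ) : Determines (fun ω => (Y ω, Z ω)) Y :=
  ⟨Prod.fst, fun _ => rfl⟩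

lemma snd (Y : Ω → β) (Z : Ω → γ) : Determines (fun ω => (Y ω, Z ω)) Z :=
  ⟨Prod.snd, fun _ => rfl⟩

lemma measurable [MeasurableSpace Ω] [MeasurableSpace β] [MeasurableSpace γ] [Countable β]
    [MeasurableSingletonClass β] (h : Determines Y Z) (hY : Measurable Y) : Measurable Z := by
  obtain ⟨g, hg⟩ := h
  rw [funext hg]
  exact (measurable_of_countable g).comp hY

end Determines

lemma preimage_prodMk_singleton {Ω α β : Type*} (X : Ω → α) (Y : Ω → β) (a : α)
    (b : β) :
    (fun ω => (X ω, Y ω)) ⁻¹' {(a, b)} = X ⁻¹' {a} ∩ Y ⁻¹' {b} := by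
  rw [← Set.singleton_prod_singleton, Set.mk_preimage_prod]

section Entropy

variable {Ω : Type*} [MeasurableSpace Ω] {μ : Measure Ω}
  {α β γ : Type*}
  [Fintype α] [MeasurableSpace α] [MeasurableSingletonClass α]
  [Fintype β] [MeasurableSpace β] [MeasurableSingletonClass β]
  [Fintype γ] [MeasurableSpace γ] [MeasurableSingletonClass γ]
  {δ : Type*} [Fintype δ] [MeasurableSpace δ] [MeasurableSingletonClass δ]
  {X : Ω → α} {Y : Ω → β} {Z : Ω → γ}

lemma entr_eq_sum (hX : Measurable X := by fun_prop) :
    entr μ X = ∑ a, negMulLog (μ.real (X ⁻¹' {a})) :=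
  Finset.sum_congr rfl fun a _ =>
    congrArg negMulLog (map_measureReal_apply hX (measurableSet_singleton a))

lemma entr_comp_of_injective {g : α → β} (hg : g.Injective) (hX : Measurable X := by fun_prop) :
    entr μ (fun ω => g (X ω)) = entr μ X := by
  rw [entr_eq_sum, entr_eq_sum]
  refine (Fintype.sum_of_injective g hg _ _ (fun b hb => ?_) fun a => ?_).symm
  · have : (fun ω => g (X ω)) ⁻¹' {b} = ∅ :=
      Set.eq_empty_of_forall_notMem fun ω h => hb ⟨X ω, h⟩
    simp [this]
  · congr 2
    ext ω
    simp [hg.eq_iff]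

lemma entr_congr (hXY : Determines X Y) (hYX : Determines Y X) (hX : Measurable X := by fun_prop)
    (hY : Measurable Y := by fun_prop) : entr μ X = entr μ Y := by
  obtain ⟨g, hg⟩ := hXY
  obtain ⟨f, hf⟩ := hYX
  have hXg : (fun ω => (X ω, Y ω)) = fun ω => (X ω, g (X ω)) := funext fun ω => by rw [hg]
  have hfY : (fun ω => (X ω, Y ω)) = fun ω => (f (Y ω), Y ω) := funext fun ω => by rw [hf]
  calc entr μ X = entr μ (fun ω => (X ω, Y ω)) := by
        rw [hXg, entr_comp_of_injective (X := X) (g := fun x => (x, g x))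
          (fun _ _ h => congrArg Prod.fst h)]
    _ = entr μ Y := by
        rw [hfY, entr_comp_of_injective (X := Y) (g := fun y => (f y, y))
          (fun _ _ h => congrArg Prod.snd h)]

lemma condEntr_congr_left {X' : Ω → δ} (h₁ : Determines X X') (h₂ : Determines X' X)
    (hX : Measurable X := by fun_prop) (hX' : Measurable X' := by fun_prop)
    (hY : Measurable Y := by fun_prop) : condEntr μ X Y = condEntr μ X' Y := by
  rw [condEntr, condEntr, entr_congr (((Determines.fst X Y).trans h₁).prodMk (.snd X Y))
    (((Determines.fst X' Y).trans h₂).prodMk (.snd X' Y))]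

lemma condEntr_congr_right {Y' : Ω → δ} (h₁ : Determines Y Y') (h₂ : Determines Y' Y)
    (hX : Measurable X := by fun_prop) (hY : Measurable Y := by fun_prop)
    (hY' : Measurable Y' := by fun_prop) : condEntr μ X Y = condEntr μ X Y' := by
  rw [condEntr, condEntr, entr_congr h₁ h₂,
    entr_congr ((Determines.fst X Y).prodMk ((Determines.snd X Y).trans h₁))
      ((Determines.fst X Y').prodMk ((Determines.snd X Y').trans h₂))]

lemma condEntr_eq_zero_of_determines (h : Determines Y X) (hX : Measurable X := by fun_prop)
    (hY : Measurable Y := by fun_prop) : condEntr μ X Y = 0 := by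
  rw [condEntr, entr_congr (Determines.snd X Y) (h.prodMk (.refl Y)), sub_self]

/-- The chain rule for conditional entropy. -/
lemma condEntr_prodMk (hX : Measurable X := by fun_prop) (hY : Measurable Y := by fun_prop)
    (hZ : Measurable Z := by fun_prop) :
    condEntr μ (fun ω => (X ω, Y ω)) Z
      = condEntr μ Y Z + condEntr μ X (fun ω => (Y ω, Z ω)) := by
  have hassoc :
      entr μ (fun ω => ((X ω, Y ω), Z ω)) = entr μ (fun ω => (X ω, (Y ω, Z ω))) :=
    entr_congr ⟨fun p => (p.1.1, (p.1.2, p.2)), fun _ => rfl⟩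
      ⟨fun p => ((p.1, p.2.1), p.2.2), fun _ => rfl⟩
  rw [condEntr, condEntr, condEntr, hassoc]
  ring

lemma condEntr_prodMk_comm (hX : Measurable X := by fun_prop) (hY : Measurable Y := by fun_prop)
    (hZ : Measurable Z := by fun_prop) :
    condEntr μ (fun ω => (X ω, Y ω)) Z = condEntr μ (fun ω => (Y ω, X ω)) Z :=
  condEntr_congr_left ⟨Prod.swap, fun _ => rfl⟩ ⟨Prod.swap, fun _ => rfl⟩

variable [IsProbabilityMeasure μ]

lemma sum_measureReal_preimage_singleton_inter (hX : Measurable X) (s : Set Ω) :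
    ∑ a, μ.real (X ⁻¹' {a} ∩ s) = μ.real s := by
  have h := sum_measureReal_preimage_singleton (μ := μ.restrict s) Finset.univ
    (fun a _ => hX (measurableSet_singleton a))
  simpa only [measureReal_restrict_apply (hX (measurableSet_singleton _)), Finset.coe_univ,
    Set.preimage_univ, measureReal_restrict_apply_univ] using h

lemma sum_measureReal_preimage_singleton_eq_one (hX : Measurable X) :
    ∑ a, μ.real (X ⁻¹' {a}) = 1 := by
  simpa using sum_measureReal_preimage_singleton_inter (μ := μ) hX Set.univ

lemma condEntr_eq_sum (hX : Measurable X := by fun_prop) (hY : Measurable Y := by fun_prop) :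
    condEntr μ X Y = ∑ b, μ.real (Y ⁻¹' {b}) *
      ∑ a, negMulLog (μ.real (X ⁻¹' {a} ∩ Y ⁻¹' {b}) / μ.real (Y ⁻¹' {b})) := by
  rw [condEntr, entr_eq_sum, entr_eq_sum, Fintype.sum_prod_type_right, ← Finset.sum_sub_distrib]
  refine Finset.sum_congr rfl fun b _ => ?_
  simp only [preimage_prodMk_singleton]
  rw [sum_negMulLog_eq_negMulLog_sum_add fun a => measureReal_nonneg,
    sum_measureReal_preimage_singleton_inter hX]
  ring

lemma condEntr_nonneg (hX : Measurable X := by fun_prop) (hY : Measurable Y := by fun_prop) :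
    0 ≤ condEntr μ X Y := by
  rw [condEntr_eq_sum]
  exact Finset.sum_nonneg fun b _ => mul_nonneg measureReal_nonneg <|
    Finset.sum_nonneg fun a _ => negMulLog_nonneg (div_nonneg measureReal_nonneg measureReal_nonneg)
      (div_le_one_of_le₀ (measureReal_mono Set.inter_subset_right) measureReal_nonneg)

lemma condEntr_le_log_card (hX : Measurable X := by fun_prop) (hY : Measurable Y := by fun_prop) :
    condEntr μ X Y ≤ log (Fintype.card α) := by
  rw [condEntr_eq_sum]
  calc _ ≤ ∑ b, μ.real (Y ⁻¹' {b}) * log (Fintype.card α) :=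
        Finset.sum_le_sum fun b _ => ?_
    _ = log (Fintype.card α) := by
      rw [← Finset.sum_mul, sum_measureReal_preimage_singleton_eq_one hY, one_mul]
  rcases eq_or_ne (μ.real (Y ⁻¹' {b})) 0 with h | h
  · simp [h]
  refine mul_le_mul_of_nonneg_left (sum_negMulLog_le_log_card
    (fun a => div_nonneg measureReal_nonneg measureReal_nonneg) ?_) measureReal_nonneg
  rw [← Finset.sum_div, sum_measureReal_preimage_singleton_inter hX, div_self h]

lemma condEntr_prodMk_le (hX : Measurable X := by fun_prop) (hY : Measurable Y := by fun_prop)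
    (hZ : Measurable Z := by fun_prop) :
    condEntr μ X (fun ω => (Y ω, Z ω)) ≤ condEntr μ X Z := by
  rw [condEntr_eq_sum, condEntr_eq_sum, Fintype.sum_prod_type_right]
  refine Finset.sum_le_sum fun c _ => ?_
  simp only [preimage_prodMk_singleton, Finset.mul_sum]
  rw [Finset.sum_comm]
  refine Finset.sum_le_sum fun a _ => ?_
  have hjensen := sum_mul_negMulLog_div_le
    (x := fun b => μ.real (X ⁻¹' {a} ∩ (Y ⁻¹' {b} ∩ Z ⁻¹' {c})))
    (w := fun b => μ.real (Y ⁻¹' {b} ∩ Z ⁻¹' {c})) (fun _ => measureReal_nonneg)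
    (fun _ => measureReal_nonneg) (fun _ => measureReal_mono_null Set.inter_subset_right)
  have hmarg : ∑ b, μ.real (X ⁻¹' {a} ∩ (Y ⁻¹' {b} ∩ Z ⁻¹' {c}))
      = μ.real (X ⁻¹' {a} ∩ Z ⁻¹' {c}) := by
    simp only [Set.inter_left_comm (X ⁻¹' {a})]
    exact sum_measureReal_preimage_singleton_inter hY _
  rwa [hmarg, sum_measureReal_preimage_singleton_inter hY] at hjensen

lemma condEntr_le_condEntr_of_determines (h : Determines Z Y) (hX : Measurable X := by fun_prop)
    (hY : Measurable Y := by fun_prop) (hZ : Measurable Z := by fun_prop) :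
    condEntr μ X Z ≤ condEntr μ X Y := by
  rw [condEntr_congr_right ((Determines.refl Z).prodMk h) (Determines.fst Z Y)]
  exact condEntr_prodMk_le

/-- The symmetry of conditional mutual information, in the form of an inequality. -/
lemma condEntr_sub_condEntr_prodMk_le {A : Ω → δ} (hA : Measurable A := by fun_prop)
    (hX : Measurable X := by fun_prop) (hY : Measurable Y := by fun_prop) :
    condEntr μ A Y - condEntr μ A (fun ω => (X ω, Y ω)) ≤ condEntr μ X Y := by
  have hswap := condEntr_prodMk_comm (μ := μ) hX hA hY
  rw [condEntr_prodMk, condEntr_prodMk] at hswap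
  linarith [condEntr_nonneg (μ := μ) hX (hA.prodMk hY)]

lemma condEntr_le_condEntr_of_determines_prodMk (h : Determines (fun ω => (X ω, Z ω)) Y)
    (hX : Measurable X := by fun_prop) (hY : Measurable Y := by fun_prop)
    (hZ : Measurable Z := by fun_prop) : condEntr μ Y Z ≤ condEntr μ X Z := by
  linarith [condEntr_sub_condEntr_prodMk_le (μ := μ) hY hX hZ,
    condEntr_eq_zero_of_determines (μ := μ) h hY]

lemma condEntr_le_condEntr_prodMk_add_log_card (hX : Measurable X := by fun_prop)
    (hY : Measurable Y := by fun_prop) (hZ : Measurable Z := by fun_prop) :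
    condEntr μ X Z ≤ condEntr μ X (fun ω => (Y ω, Z ω)) + log (Fintype.card β) := by
  linarith [condEntr_sub_condEntr_prodMk_le (μ := μ) hX hY hZ,
    condEntr_le_log_card (μ := μ) hY hZ]

lemma condEntr_le_condEntr_prodMk_of_condMI_eq_zero {A : Ω → α} {B : Ω → β} {C : Ω → γ}
    {B' : Ω → δ} (hABC : condMI μ A B C = 0) (hB' : Determines B B')
    (hA : Measurable A := by fun_prop) (hB : Measurable B := by fun_prop)
    (hC : Measurable C := by fun_prop) :
    condEntr μ B' C ≤ condEntr μ B' (fun ω => (A ω, C ω)) := by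
  have hB'm : Measurable B' := hB'.measurable hB
  have hB'B : Determines B (fun ω => (B ω, B' ω)) := (Determines.refl B).prodMk hB'
  have hsplit_C : condEntr μ B C = condEntr μ B' C + condEntr μ B (fun ω => (B' ω, C ω)) := by
    rw [condEntr_congr_left hB'B (.fst B B'), condEntr_prodMk]
  have hsplit_AC : condEntr μ B (fun ω => (A ω, C ω)) = condEntr μ B' (fun ω => (A ω, C ω))
      + condEntr μ B (fun ω => (B' ω, A ω, C ω)) := by
    rw [condEntr_congr_left hB'B (.fst B B'), condEntr_prodMk]
  have hcondB : condEntr μ B C = condEntr μ B (fun ω => (A ω, C ω)) := by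
    have hswap := condEntr_prodMk_comm (μ := μ) hA hB hC
    rw [condEntr_prodMk, condEntr_prodMk] at hswap
    rw [condMI, condEntr_prodMk] at hABC
    linarith
  have hmono :
      condEntr μ B (fun ω => (B' ω, A ω, C ω)) ≤ condEntr μ B (fun ω => (B' ω, C ω)) :=
    condEntr_le_condEntr_of_determines ⟨fun p => (p.1, p.2.2), fun _ => rfl⟩
  linarith

lemma condEntr_eq_log_card_of_indepFun (hunif : IsUnif μ X) (hXY : IndepFun X Y μ)
    (hX : Measurable X := by fun_prop) (hY : Measurable Y := by fun_prop) :
    condEntr μ X Y = log (Fintype.card α) := by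
  have hjoint : ∀ a b,
      μ.real (X ⁻¹' {a} ∩ Y ⁻¹' {b}) = (Fintype.card α : ℝ)⁻¹ * μ.real (Y ⁻¹' {b}) :=
    fun a b => by
      rw [measureReal_def, hXY.measure_inter_preimage_eq_mul _ _ (measurableSet_singleton a)
        (measurableSet_singleton b), hunif a, ENNReal.toReal_mul, measureReal_def]
      simp
  rw [condEntr_eq_sum]
  simp only [hjoint]
  calc _ = ∑ b, μ.real (Y ⁻¹' {b}) * log (Fintype.card α) :=
        Finset.sum_congr rfl fun b _ => by
        rcases eq_or_ne (μ.real (Y ⁻¹' {b})) 0 with h | h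
        · simp [h]
        obtain ⟨ω, -⟩ := nonempty_of_measureReal_ne_zero h
        have : Nonempty α := ⟨X ω⟩
        have hcard : (Fintype.card α : ℝ) ≠ 0 := Nat.cast_ne_zero.mpr Fintype.card_ne_zero
        rw [mul_div_cancel_right₀ _ h, Finset.sum_const, Finset.card_univ, nsmul_eq_mul,
          negMulLog, log_inv]
        field_simp
    _ = log (Fintype.card α) := by
      rw [← Finset.sum_mul, sum_measureReal_preimage_singleton_eq_one hY, one_mul]

end Entropy

lemma ProbabilityTheory.IndepFun.indepFun_prodMk_of_prodMk {Ω α β γ : Type*}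
    [MeasurableSpace Ω] [MeasurableSpace α] [MeasurableSpace β] [MeasurableSpace γ] {μ : Measure Ω}
    [IsFiniteMeasure μ] {A : Ω → α} {B : Ω → β} {C : Ω → γ} (hAB : IndepFun A B μ)
    (hABC : IndepFun (fun ω => (A ω, B ω)) C μ) (hA : Measurable A) (hB : Measurable B)
    (hC : Measurable C) : IndepFun A (fun ω => (B ω, C ω)) μ := by
  have hBC : IndepFun B C μ := hABC.comp measurable_snd measurable_id
  rw [indepFun_iff_map_prod_eq_prod_map_map hA.aemeasurable (hB.prodMk hC).aemeasurable,
    hBC.map_prod_eq_prod_map_map hB.aemeasurable hC.aemeasurable, ← Measure.prodAssoc_prod,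
    ← hAB.map_prod_eq_prod_map_map hA.aemeasurable hB.aemeasurable,
    ← hABC.map_prod_eq_prod_map_map (hA.prodMk hB).aemeasurable hC.aemeasurable,
    Measure.map_map MeasurableEquiv.prodAssoc.measurable ((hA.prodMk hB).prodMk hC)]
  rfl

structure IndepUniformInputs {Ω ι V κ : Type*} [MeasurableSpace Ω] [Fintype V]
    [MeasurableSpace V] [MeasurableSpace κ] (μ : Measure Ω) (W : ι → Ω → V) (Z : Ω → κ) : Prop where
  measurable_input : ∀ k, Measurable (W k)
  measurable_key : Measurable Z
  isUnif : ∀ k, IsUnif μ (W k)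
  iIndepFun : iIndepFun W μ
  indepFun_key : IndepFun (fun ω k => W k ω) Z μ

namespace IndepUniformInputs

variable {Ω : Type*} [MeasurableSpace Ω] {μ : Measure Ω} [IsProbabilityMeasure μ]
  {ι V κ : Type*} [Fintype ι] [DecidableEq ι] [Fintype V] [MeasurableSpace V]
  [MeasurableSpace κ] {W : ι → Ω → V} {Z : Ω → κ}

lemma indepFun_input_others (h : IndepUniformInputs μ W Z) (a : ι) :
    IndepFun (W a) (fun ω => ((fun j : {j // j ≠ a} => W j ω), Z ω)) μ := by
  have hW := h.measurable_input
  have hZ := h.measurable_key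
  have hothers : IndepFun (W a) (fun ω (j : {j // j ≠ a}) => W j ω) μ :=
    (h.iIndepFun.indepFun_finset {a} (Finset.univ.erase a) (by simp) hW).comp
      (φ := fun w : ({a} : Finset ι) → V => w ⟨a, Finset.mem_singleton_self a⟩)
      (ψ := fun (w : ((Finset.univ.erase a : Finset ι)) → V) (j : {j // j ≠ a}) =>
        w ⟨j, Finset.mem_erase.mpr ⟨j.2, Finset.mem_univ _⟩⟩)
      (by fun_prop) (by fun_prop)
  exact hothers.indepFun_prodMk_of_prodMk
    (h.indepFun_key.comp (φ := fun w => (w a, fun j : {j // j ≠ a} => w j)) (by fun_prop)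
      measurable_id) (hW a) (by fun_prop) hZ

variable [AddCommGroup V] [MeasurableSingletonClass V] [Fintype κ] [MeasurableSingletonClass κ]
  {M : Type*} [Fintype M] [MeasurableSpace M] [MeasurableSingletonClass M]
  {F : ι → V → κ → M}

lemma log_card_le_condEntr_message (h : IndepUniformInputs μ W Z)
    (hcorrect : condEntr μ (fun ω => ∑ k, W k ω) (fun ω k => F k (W k ω) (Z ω)) = 0)
    (a : ι) :
    log (Fintype.card V) ≤ condEntr μ (fun ω => F a (W a ω) (Z ω))
      (fun ω => ((fun j : {j // j ≠ a} => W j ω), Z ω)) := by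
  have hW := h.measurable_input
  have hZ := h.measurable_key
  have hfull : condEntr μ (W a) (fun ω => ((fun j : {j // j ≠ a} => W j ω), Z ω))
      = log (Fintype.card V) :=
    condEntr_eq_log_card_of_indepFun (h.isUnif a) (h.indepFun_input_others a)
  have hsum : condEntr μ (fun ω => ∑ k, W k ω)
      (fun ω => (F a (W a ω) (Z ω), (fun j : {j // j ≠ a} => W j ω), Z ω)) = 0 := by
    refine le_antisymm ((condEntr_le_condEntr_of_determines ⟨fun p k =>
      if hk : k = a then p.1 else F k (p.2.1 ⟨k, hk⟩) p.2.2, fun ω => ?_⟩).trans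
        hcorrect.le) condEntr_nonneg
    funext k
    by_cases hk : k = a
    · subst hk; simp
    · simp [hk]
  have hrecover : condEntr μ (W a)
      (fun ω => (F a (W a ω) (Z ω), (fun j : {j // j ≠ a} => W j ω), Z ω)) = 0 := by
    refine le_antisymm ((condEntr_le_condEntr_of_determines_prodMk
      ⟨fun p => p.1 - ∑ j, p.2.2.1 j, fun ω => ?_⟩).trans hsum.le) condEntr_nonneg
    simp [Fintype.sum_eq_add_sum_subtype_ne _ a]
  linarith [condEntr_sub_condEntr_prodMk_le (μ := μ) (A := W a)
    (X := fun ω => F a (W a ω) (Z ω))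
    (Y := fun ω => ((fun j : {j // j ≠ a} => W j ω), Z ω))]

lemma card_mul_log_card_le_condEntr_messages (h : IndepUniformInputs μ W Z)
    (hcorrect : condEntr μ (fun ω => ∑ k, W k ω) (fun ω k => F k (W k ω) (Z ω)) = 0)
    {T : Finset ι} {δ : Type*} [Fintype δ] [MeasurableSpace δ] [MeasurableSingletonClass δ]
    {D : Ω → δ} (hD : Determines (fun ω => ((fun j : {j // j ∈ T} => W j ω), Z ω)) D)
    {A : Finset ι} (hAT : Disjoint A T) :
    A.card * log (Fintype.card V)
      ≤ condEntr μ (fun ω (k : {k // k ∈ A}) => F k (W k ω) (Z ω)) D := by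
  have hW := h.measurable_input
  have hZ := h.measurable_key
  have hDm : Measurable D := hD.measurable (by fun_prop)
  obtain ⟨d, hd⟩ := hD
  induction A using Finset.induction_on with
  | empty => simpa using condEntr_nonneg
  | insert a A ha ih =>
    obtain ⟨haT, hAT⟩ := Finset.disjoint_insert_left.mp hAT
    have hsplit : condEntr μ (fun ω (k : {k // k ∈ insert a A}) => F k (W k ω) (Z ω)) D
        = condEntr μ (fun ω => (F a (W a ω) (Z ω),
            fun k : {k // k ∈ A} => F k (W k ω) (Z ω))) D := by
      refine condEntr_congr_left ⟨fun x => (x ⟨a, Finset.mem_insert_self a A⟩,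
        fun k => x ⟨k, Finset.mem_insert_of_mem k.2⟩), fun _ => rfl⟩
        ⟨fun p k => if hk : k.1 = a then p.1
          else p.2 ⟨k, (Finset.mem_insert.mp k.2).resolve_left hk⟩, fun ω => ?_⟩
      funext k
      by_cases hk : k.1 = a <;> simp [hk]
    have hnew : log (Fintype.card V) ≤ condEntr μ (fun ω => F a (W a ω) (Z ω))
        (fun ω => ((fun k : {k // k ∈ A} => F k (W k ω) (Z ω)), D ω)) := by
      refine (h.log_card_le_condEntr_message hcorrect a).trans
        (condEntr_le_condEntr_of_determines ⟨fun p => (fun k => F k (p.1 ⟨k, ?_⟩) p.2,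
          d (fun j => p.1 ⟨j, ?_⟩, p.2)), fun ω => ?_⟩)
      · exact fun hka => ha (hka ▸ k.2)
      · exact fun hja => haT (hja ▸ j.2)
      · simp [hd]
    rw [hsplit, condEntr_prodMk, Finset.card_insert_of_notMem ha, Nat.cast_succ]
    linarith [ih hAT]

theorem card_compl_mul_log_card_le (h : IndepUniformInputs μ W Z)
    (hcorrect : condEntr μ (fun ω => ∑ k, W k ω) (fun ω k => F k (W k ω) (Z ω)) = 0)
    {T : Finset ι} {δ : Type*} [Fintype δ] [MeasurableSpace δ] [MeasurableSingletonClass δ]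
    {D : Ω → δ} (hD : Determines (fun ω => ((fun j : {j // j ∈ T} => W j ω), Z ω)) D)
    (hsec : condMI μ (fun ω k => W k ω) (fun ω k => F k (W k ω) (Z ω))
      (fun ω => (∑ k, W k ω, D ω)) = 0)
    {κ' : Type*} [Fintype κ'] [MeasurableSpace κ'] [MeasurableSingletonClass κ']
    {ZU : Ω → κ'} (hZU : Measurable ZU)
    (hXU : Determines (fun ω => (ZU ω, (fun k => W k ω), D ω))
      (fun ω (k : {k // k ∈ Tᶜ}) => F k (W k ω) (Z ω))) :
    Tᶜ.card * log (Fintype.card V) ≤ log (Fintype.card κ') + log (Fintype.card V) := by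
  have hW := h.measurable_input
  have hZ := h.measurable_key
  have hDm : Measurable D := hD.measurable (by fun_prop)
  calc Tᶜ.card * log (Fintype.card V)
      ≤ condEntr μ (fun ω (k : {k // k ∈ Tᶜ}) => F k (W k ω) (Z ω)) D :=
        h.card_mul_log_card_le_condEntr_messages hcorrect hD disjoint_compl_left
    _ ≤ condEntr μ (fun ω (k : {k // k ∈ Tᶜ}) => F k (W k ω) (Z ω))
          (fun ω => (∑ k, W k ω, D ω)) + log (Fintype.card V) :=
        condEntr_le_condEntr_prodMk_add_log_card
    _ ≤ condEntr μ (fun ω (k : {k // k ∈ Tᶜ}) => F k (W k ω) (Z ω))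
          (fun ω => ((fun k => W k ω), ∑ k, W k ω, D ω)) + log (Fintype.card V) := by
        gcongr
        exact condEntr_le_condEntr_prodMk_of_condMI_eq_zero hsec ⟨fun x k => x k, fun _ => rfl⟩
    _ ≤ condEntr μ ZU (fun ω => ((fun k => W k ω), ∑ k, W k ω, D ω))
          + log (Fintype.card V) := by
        gcongr
        exact condEntr_le_condEntr_of_determines_prodMk
          (Determines.trans ⟨fun p => (p.1, p.2.1, p.2.2.2), fun _ => rfl⟩ hXU)
    _ ≤ log (Fintype.card κ') + log (Fintype.card V) := by
        gcongr
        exact condEntr_le_log_card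

end IndepUniformInputs

section GroupwiseKeys

variable {Ω ι V κ M : Type*} [Fintype ι] [DecidableEq ι]

lemma card_subtype_card_eq_and_subset (G : ℕ) (U : Finset ι) :
    Fintype.card {g : Finset ι // g.card = G ∧ g ⊆ U} = U.card.choose G := by
  rw [Fintype.card_subtype, ← Finset.card_powersetCard]
  congr 1
  ext g
  simp [Finset.mem_powersetCard, and_comm]

/-- A group key is either held by a colluding user, or its group lies outside the colluding set. -/
lemma determines_messages_of_groupKeys {G : ℕ} (W : ι → Ω → V)
    (S : {g : Finset ι // g.card = G} → Ω → κ)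
    (f : ∀ k : ι, V → ({g : Finset ι // g.card = G ∧ k ∈ g} → κ) → M) (T : Finset ι) :
    Determines
      (fun ω => ((fun g : {g : Finset ι // g.card = G ∧ g ⊆ Tᶜ} => S ⟨g.1, g.2.1⟩ ω),
        (fun k => W k ω),
        fun k : {k // k ∈ T} => (W k ω, fun g : {g : Finset ι // g.card = G ∧ k.1 ∈ g} =>
          S ⟨g.1, g.2.1⟩ ω)))
      (fun ω (k : {k // k ∈ Tᶜ}) => f k (W k ω) fun g => S ⟨g.1, g.2.1⟩ ω) := by
  classical
  refine ⟨fun p k => f k (p.2.1 k) fun g =>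
    if hg : ∃ j ∈ T, j ∈ g.1 then (p.2.2 ⟨hg.choose, hg.choose_spec.1⟩).2
      ⟨g.1, g.2.1, hg.choose_spec.2⟩
    else p.1 ⟨g.1, g.2.1, fun j hj => Finset.mem_compl.mpr fun hjT => hg ⟨j, hjT, hj⟩⟩,
    fun ω => ?_⟩
  funext k
  dsimp only
  congr 1
  funext g
  split_ifs <;> rfl

end GroupwiseKeys

lemma log_card_fin_fun_zmod (q n : ℕ) [NeZero q] :
    log (Fintype.card (Fin n → ZMod q)) = n * log q := by
  simp [ZMod.card, log_pow]

lemma log_card_fun_fin_fun_zmod (q n : ℕ) [NeZero q] {ι : Type*} [Fintype ι] [DecidableEq ι] :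
    log (Fintype.card (ι → Fin n → ZMod q)) = Fintype.card ι * (n * log q) := by
  rw [Fintype.card_fun, Nat.cast_pow, log_pow, log_card_fin_fun_zmod]

theorem stmt9_general
    (q K L LX LS T G : ℕ) [NeZero q] (hq : IsPrimePow q)
    {Ω : Type*} [MeasurableSpace Ω] (μ : Measure Ω) [IsProbabilityMeasure μ]
    (W : Fin K → Ω → (Fin L → ZMod q))
    (S : {g : Finset (Fin K) // g.card = G} → Ω → (Fin LS → ZMod q))
    (X : Fin K → Ω → (Fin LX → ZMod q))
    (hWmeas : ∀ k, Measurable (W k)) (hSmeas : ∀ g, Measurable (S g))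
    (hWunif : ∀ k, IsUnif μ (W k))
    (hWindep : iIndepFun W μ)
    (hWSindep : IndepFun (fun ω => fun k => W k ω) (fun ω => fun g => S g ω) μ)
    (f : ∀ k : Fin K, (Fin L → ZMod q) →
      (∀ _g : {g : Finset (Fin K) // g.card = G ∧ k ∈ g}, Fin LS → ZMod q) →
      (Fin LX → ZMod q))
    (hX : ∀ k, X k = fun ω => f k (W k ω)
      (fun g : {g : Finset (Fin K) // g.card = G ∧ k ∈ g} => S ⟨g.1, g.2.1⟩ ω))
    (hCorrect : condEntr μ (fun ω => ∑ k, W k ω) (fun ω => fun k => X k ω) = 0)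
    (T' : Finset (Fin K)) (hT' : T'.card = T)
    (hSec : condMI μ (fun ω => fun k => W k ω) (fun ω => fun k => X k ω)
      (fun ω => (∑ k, W k ω,
        fun k : {k : Fin K // k ∈ T'} => (W k.1 ω,
          fun g : {g : Finset (Fin K) // g.card = G ∧ k.1 ∈ g} => S ⟨g.1, g.2.1⟩ ω))) = 0) :
    (K - T - 1) * L ≤ Nat.choose (K - T) G * LS := by
  obtain rfl : X = fun k ω => f k (W k ω) fun g => S ⟨g.1, g.2.1⟩ ω := funext hX
  have hinputs : IndepUniformInputs μ W (fun ω g => S g ω) :=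
    ⟨hWmeas, by fun_prop, hWunif, hWindep, hWSindep⟩
  have hbound := hinputs.card_compl_mul_log_card_le
    -- `by exact` postpones these unifications until the instance arguments are synthesized
    (F := fun k v z => f k v fun g => z ⟨g.1, g.2.1⟩) (by exact hCorrect)
    (D := fun ω (k : {k : Fin K // k ∈ T'}) => (W k.1 ω,
          fun g : {g : Finset (Fin K) // g.card = G ∧ k.1 ∈ g} => S ⟨g.1, g.2.1⟩ ω))
    ⟨fun p k => (p.1 k, fun g => p.2 ⟨g.1, g.2.1⟩), fun _ => rfl⟩ (by exact hSec)
    (ZU := fun ω (g : {g : Finset (Fin K) // g.card = G ∧ g ⊆ T'ᶜ}) => S ⟨g.1, g.2.1⟩ ω)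
    (by fun_prop) (determines_messages_of_groupKeys W S f T')
  have hcard : T'ᶜ.card = K - T := by rw [Finset.card_compl, Fintype.card_fin, hT']
  rw [log_card_fin_fun_zmod, log_card_fun_fin_fun_zmod, card_subtype_card_eq_and_subset,
    hcard] at hbound
  have hlog : 0 < log q := log_pos (by exact_mod_cast hq.one_lt)
  have hreal : (((K - T) * L : ℕ) : ℝ) ≤ ((Nat.choose (K - T) G * LS + L : ℕ) : ℝ) := by
    push_cast
    refine le_of_mul_le_mul_right ?_ hlog
    linarith
  rw [Nat.sub_one_mul, Nat.sub_le_iff_le_add]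
  exact_mod_cast hreal

/-- for secure summation with symmetric groupwise keys of group size
`G ≤ K − T`, correctness and security against a colluding set of size `T` force the
groupwise key length to satisfy `(K−T−1)·L ≤ C(K−T, G)·L_S`, i.e.
`R_S ≥ (K−T−1)/C(K−T, G)`. -/
theorem stmt9
    (q K L LX LS T G : ℕ) [NeZero q] (hq : IsPrimePow q) (hK : 2 ≤ K)
    (hT : T ≤ K - 2) (hL : 1 ≤ L) (hLX : 1 ≤ LX)
    (hG1 : 1 ≤ G) (hGT : G ≤ K - T)
    {Ω : Type*} [MeasurableSpace Ω] (μ : Measure Ω) [IsProbabilityMeasure μ]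
    (W : Fin K → Ω → (Fin L → ZMod q))
    (S : {g : Finset (Fin K) // g.card = G} → Ω → (Fin LS → ZMod q))
    (X : Fin K → Ω → (Fin LX → ZMod q))
    (hWmeas : ∀ k, Measurable (W k)) (hSmeas : ∀ g, Measurable (S g))
    (hWunif : ∀ k, IsUnif μ (W k)) (hSunif : ∀ g, IsUnif μ (S g))
    (hWindep : iIndepFun W μ)
    (hSindep : iIndepFun S μ)
    (hWSindep : IndepFun (fun ω => fun k => W k ω) (fun ω => fun g => S g ω) μ)
    (f : ∀ k : Fin K, (Fin L → ZMod q) →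
      (∀ _g : {g : Finset (Fin K) // g.card = G ∧ k ∈ g}, Fin LS → ZMod q) →
      (Fin LX → ZMod q))
    (hX : ∀ k, X k = fun ω => f k (W k ω)
      (fun g : {g : Finset (Fin K) // g.card = G ∧ k ∈ g} => S ⟨g.1, g.2.1⟩ ω))
    (hXmeas : ∀ k, Measurable (X k))
    (hCorrect : condEntr μ (fun ω => ∑ k, W k ω) (fun ω => fun k => X k ω) = 0)
    (T' : Finset (Fin K)) (hT' : T'.card = T)
    (hSec : condMI μ (fun ω => fun k => W k ω) (fun ω => fun k => X k ω)
      (fun ω => (∑ k, W k ω,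
        fun k : {k : Fin K // k ∈ T'} => (W k.1 ω,
          fun g : {g : Finset (Fin K) // g.card = G ∧ k.1 ∈ g} => S ⟨g.1, g.2.1⟩ ω))) = 0) :
    (K - T - 1) * L ≤ Nat.choose (K - T) G * LS :=
  stmt9_general q K L LX LS T G hq μ W S X hWmeas hSmeas hWunif hWindep hWSindep f hX hCorrect T'
    hT' hSec
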